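/- For the class H = {h_{a,b}} of lexicographic initial segments on ℕ×ℕ and the proof-checking perturbation type U of Theorem 4.3 (U((i,0)) = {(i,0)} ∪ {(i,j) : π_j proves φ_i}, U((i,j)) = {(i,0),(i,j)} for j > 0), the margin class H_mar^U has VC dimension exactly 1. -/
import Mathlib


/-- A family `G` of subsets of `X` shatters a finite set `S` if every subset of `S`
is cut out by some member of `G`. -/
def ShattersFam {X : Type*} (G : Set (Set X)) (S : Finset X) : Prop :=
  ∀ Y ⊆ S, ∃ g ∈ G, ∀ x ∈ S, x ∈ g ↔ x ∈ Y

/-- The class of lexicographic initial segments on `ℕ × ℕ`: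
`h_{a,b}(i,j) = 1` iff `i < a` or (`i = a` and `j ≤ b`), for `a, b ∈ ℕ ∪ {0, ∞}`. -/
def Hlex : Set (ℕ × ℕ → Bool) :=
  {h | ∃ a b : ℕ∞, ∀ p : ℕ × ℕ,
    h p = decide ((p.1 : ℕ∞) < a ∨ ((p.1 : ℕ∞) = a ∧ (p.2 : ℕ∞) ≤ b))}

/-- The proof-checking perturbation type of Theorem 4.3, parametrized by the
relation `Proves j i` = "the `j`-th proof proves the `i`-th formula":
`U((i,0)) = {(i,0)} ∪ {(i,j) : π_j proves φ_i}` and `U((i,j)) = {(i,0),(i,j)}` for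
`j > 0`. -/
def Ulex (Proves : ℕ → ℕ → Prop) : ℕ × ℕ → Set (ℕ × ℕ)
  | (i, 0) => {(i, 0)} ∪ {q | ∃ j, q = (i, j) ∧ Proves j i}
  | (i, j + 1) => {(i, 0), (i, j + 1)}

/-- The margin set of `h` with respect to perturbation type `U`. -/
def marginSet {α : Type*} (U : α → Set α) (h : α → Bool) : Set α :=
  {x | ∃ z ∈ U x, h x ≠ h z}

namespace LexAux

/-- canonical representative of `h_{a,b}`. -/
def hcan (a b : ℕ∞) : ℕ × ℕ → Bool :=
  fun p => decide ((p.1 : ℕ∞) < a ∨ ((p.1 : ℕ∞) = a ∧ (p.2 : ℕ∞) ≤ b))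

lemma hcan_ne_iff (a b : ℕ∞) (p q : ℕ × ℕ) :
    hcan a b p ≠ hcan a b q ↔
      ¬(((p.1 : ℕ∞) < a ∨ ((p.1 : ℕ∞) = a ∧ (p.2 : ℕ∞) ≤ b)) ↔
        ((q.1 : ℕ∞) < a ∨ ((q.1 : ℕ∞) = a ∧ (q.2 : ℕ∞) ≤ b))) := by
  simp only [hcan, ne_eq, decide_eq_decide]

lemma mem_margin_succ (Proves : ℕ → ℕ → Prop) (a b : ℕ∞) (i k : ℕ) :
    (i, k + 1) ∈ marginSet (Ulex Proves) (hcan a b) ↔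
      ((i : ℕ∞) = a ∧ b < ((k + 1 : ℕ) : ℕ∞)) := by
  constructor
  · rintro ⟨z, hz, hne⟩
    have hz' : z = (i, 0) ∨ z = (i, k + 1) := hz
    rcases hz' with rfl | rfl
    · rw [hcan_ne_iff] at hne
      by_cases hlt : (i : ℕ∞) < a
      · exact absurd (iff_of_true (Or.inl hlt) (Or.inl hlt)) hne
      by_cases heq : (i : ℕ∞) = a
      · refine ⟨heq, ?_⟩
        subst heq
        simp only [lt_irrefl, false_or, true_and, Nat.cast_zero, zero_le, iff_true] at hne
        exact not_le.mp hne
      · exact absurd (iff_of_false (by tauto) (by tauto)) hne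
    · exact absurd rfl hne
  · rintro ⟨heq, hb⟩
    refine ⟨(i, 0), Or.inl rfl, ?_⟩
    rw [hcan_ne_iff]
    subst heq
    simp only [lt_irrefl, false_or, true_and, Nat.cast_zero, zero_le, iff_true]
    exact not_le.mpr hb

lemma mem_margin_zero (Proves : ℕ → ℕ → Prop) (a b : ℕ∞) (i : ℕ) :
    (i, 0) ∈ marginSet (Ulex Proves) (hcan a b) ↔
      ((i : ℕ∞) = a ∧ ∃ p, Proves p i ∧ b < (p : ℕ∞)) := by
  constructor
  · rintro ⟨z, hz, hne⟩
    have hz' : z = (i, 0) ∨ ∃ j, z = (i, j) ∧ Proves j i := hz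
    rcases hz' with rfl | ⟨p, rfl, hp⟩
    · exact absurd rfl hne
    · rw [hcan_ne_iff] at hne
      by_cases hlt : (i : ℕ∞) < a
      · exact absurd (iff_of_true (Or.inl hlt) (Or.inl hlt)) hne
      by_cases heq : (i : ℕ∞) = a
      · refine ⟨heq, p, hp, ?_⟩
        subst heq
        simp only [lt_irrefl, false_or, true_and, Nat.cast_zero, zero_le, true_iff] at hne
        exact not_le.mp hne
      · exact absurd (iff_of_false (by tauto) (by tauto)) hne
  · rintro ⟨heq, p, hp, hb⟩
    refine ⟨(i, p), Or.inr ⟨p, rfl, hp⟩, ?_⟩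
    rw [hcan_ne_iff]
    subst heq
    simp only [lt_irrefl, false_or, true_and, Nat.cast_zero, zero_le, true_iff]
    exact not_le.mpr hb

lemma margin_fst (Proves : ℕ → ℕ → Prop) (a b : ℕ∞) :
    ∀ x ∈ marginSet (Ulex Proves) (hcan a b), (x.1 : ℕ∞) = a := by
  rintro ⟨i, _ | k⟩ hx
  · exact ((mem_margin_zero Proves a b i).1 hx).1
  · exact ((mem_margin_succ Proves a b i k).1 hx).1

lemma hcan_mem_Hlex (a b : ℕ∞) : hcan a b ∈ Hlex := ⟨a, b, fun _ => rfl⟩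

lemma eq_hcan {h : ℕ × ℕ → Bool} (hh : h ∈ Hlex) : ∃ a b : ℕ∞, h = hcan a b := by
  obtain ⟨a, b, hh⟩ := hh
  exact ⟨a, b, funext hh⟩

/-- Two points with the same first coordinate and distinct second coordinates
cannot be shattered. -/
lemma no_shatter_pair (Proves : ℕ → ℕ → Prop) (S : Finset (ℕ × ℕ))
    (hS : ShattersFam (marginSet (Ulex Proves) '' Hlex) S)
    (i j j' : ℕ) (hjj : j < j') (hx : (i, j) ∈ S) (hy : (i, j') ∈ S) : False := by
  obtain ⟨k, rfl⟩ : ∃ k, j' = k + 1 := ⟨j' - 1, by omega⟩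
  cases j with
  | zero =>
    -- Y₁ = {(i,0)}
    obtain ⟨g₁, ⟨h₁, hH₁, rfl⟩, hiff₁⟩ := hS {(i, 0)} (Finset.singleton_subset_iff.mpr hx)
    obtain ⟨a₁, b₁, rfl⟩ := eq_hcan hH₁
    have hg₁ : (i, 0) ∈ marginSet (Ulex Proves) (hcan a₁ b₁) :=
      (hiff₁ (i, 0) hx).2 (Finset.mem_singleton_self _)
    obtain ⟨ha₁, p, hp, hbp⟩ := (mem_margin_zero Proves a₁ b₁ i).1 hg₁
    have hng₁ : (i, k + 1) ∉ marginSet (Ulex Proves) (hcan a₁ b₁) := by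
      intro hmem
      have := (hiff₁ (i, k + 1) hy).1 hmem
      simp at this
    have hb₁ : ((k + 1 : ℕ) : ℕ∞) ≤ b₁ := by
      by_contra hc
      exact hng₁ ((mem_margin_succ Proves a₁ b₁ i k).2 ⟨ha₁, not_le.mp hc⟩)
    -- Y₂ = {(i,k+1)}
    obtain ⟨g₂, ⟨h₂, hH₂, rfl⟩, hiff₂⟩ := hS {(i, k + 1)} (Finset.singleton_subset_iff.mpr hy)
    obtain ⟨a₂, b₂, rfl⟩ := eq_hcan hH₂
    have hg₂ : (i, k + 1) ∈ marginSet (Ulex Proves) (hcan a₂ b₂) :=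
      (hiff₂ (i, k + 1) hy).2 (Finset.mem_singleton_self _)
    obtain ⟨ha₂, hb₂⟩ := (mem_margin_succ Proves a₂ b₂ i k).1 hg₂
    have hng₂ : (i, 0) ∉ marginSet (Ulex Proves) (hcan a₂ b₂) := by
      intro hmem
      have := (hiff₂ (i, 0) hx).1 hmem
      simp at this
    exact hng₂ ((mem_margin_zero Proves a₂ b₂ i).2
      ⟨ha₂, p, hp, lt_of_lt_of_le hb₂ (lt_of_le_of_lt hb₁ hbp).le⟩)
  | succ m =>
    obtain ⟨g, ⟨h, hH, rfl⟩, hiff⟩ := hS {(i, m + 1)} (Finset.singleton_subset_iff.mpr hx)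
    obtain ⟨a, b, rfl⟩ := eq_hcan hH
    have hg : (i, m + 1) ∈ marginSet (Ulex Proves) (hcan a b) :=
      (hiff (i, m + 1) hx).2 (Finset.mem_singleton_self _)
    obtain ⟨ha, hb⟩ := (mem_margin_succ Proves a b i m).1 hg
    have hg' : (i, k + 1) ∈ marginSet (Ulex Proves) (hcan a b) :=
      (mem_margin_succ Proves a b i k).2
        ⟨ha, lt_of_lt_of_le hb (Nat.cast_le.mpr (by omega))⟩
    have := (hiff (i, k + 1) hy).1 hg'
    simp at this
    omega

end LexAux

open LexAux in
/-- For the class of lexicographic initial segments and the proof-checking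
perturbation type of Theorem 4.3, the margin class `H_mar^U` has VC dimension
exactly 1. -/
theorem lex_margin_class_vc_eq_one (Proves : ℕ → ℕ → Prop) :
    (∃ S : Finset (ℕ × ℕ), S.card = 1 ∧
      ShattersFam (marginSet (Ulex Proves) '' Hlex) S) ∧
    (∀ S : Finset (ℕ × ℕ), ShattersFam (marginSet (Ulex Proves) '' Hlex) S →
      S.card ≤ 1) := by
  constructor
  · refine ⟨{(0, 1)}, Finset.card_singleton _, ?_⟩
    intro Y hY
    by_cases hmem : ((0 : ℕ), (1 : ℕ)) ∈ Y
    · refine ⟨marginSet (Ulex Proves) (hcan 0 0),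
        ⟨hcan 0 0, hcan_mem_Hlex 0 0, rfl⟩, ?_⟩
      intro x hx
      rw [Finset.mem_singleton] at hx
      subst hx
      simp only [hmem, iff_true]
      exact (mem_margin_succ Proves 0 0 0 0).2 ⟨by simp, by norm_num⟩
    · refine ⟨marginSet (Ulex Proves) (hcan ⊤ 0),
        ⟨hcan ⊤ 0, hcan_mem_Hlex ⊤ 0, rfl⟩, ?_⟩
      intro x hx
      rw [Finset.mem_singleton] at hx
      subst hx
      constructor
      · intro hg
        have := margin_fst Proves ⊤ 0 _ hg
        simp at this
      · intro hxy
        exact absurd hxy hmem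
  · intro S hS
    by_contra hcard
    have h2 : 1 < S.card := by omega
    obtain ⟨x, hxS, y, hyS, hxy⟩ := Finset.one_lt_card.mp h2
    obtain ⟨i, j⟩ := x
    obtain ⟨i', j'⟩ := y
    by_cases hii : i = i'
    · subst hii
      have hjj : j ≠ j' := fun h => hxy (by simp [h])
      rcases Nat.lt_or_ge j j' with h | h
      · exact no_shatter_pair Proves S hS i j j' h hxS hyS
      · exact no_shatter_pair Proves S hS i j' j (by omega) hyS hxS
    · obtain ⟨g, ⟨h, hH, rfl⟩, hiff⟩ := hS {(i, j), (i', j')}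
        (by simp [Finset.insert_subset_iff, hxS, hyS])
      obtain ⟨a, b, rfl⟩ := eq_hcan hH
      have h1 : (i, j) ∈ marginSet (Ulex Proves) (hcan a b) :=
        (hiff (i, j) hxS).2 (by simp)
      have h2 : (i', j') ∈ marginSet (Ulex Proves) (hcan a b) :=
        (hiff (i', j') hyS).2 (by simp)
      have e1 := margin_fst Proves a b _ h1
      have e2 := margin_fst Proves a b _ h2
      simp only at e1 e2
      rw [← e2] at e1
      exact hii (by exact_mod_cast e1)
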